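/- Let μ be a partition of n of length s ≥ 2 with 2 ≤ i < j ≤ s, μ_{i-1} > μ_i, (j = s or μ_j > μ_{j+1}), and suppose μ₁ = 3, μ_t = 2 for 2 ≤ t ≤ i−1, and μ_t = 1 for i ≤ t ≤ s. Then f(μ(i,j)) = f(μ), where μ(i,j) increases the i-th part by 1 and decreases the j-th part by 1 (deleting a zero part). -/

import Mathlib

/-- The odd double factorial `(2k-1)!! = 1 * 3 * ... * (2k-1)`, with `odf 0 = 1`. -/
def odf (k : Nat) : Int := ∏ j ∈ Finset.Icc 1 k, (2 * (j : Int) - 1)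

/-- Subtract `k` from every part, deleting parts that become zero. -/
def subHat (k : Nat) (l : List Nat) : List Nat :=
  (l.map (fun x => x - k)).filter (fun x => x ≠ 0)

/-- `l` is a partition: a non-increasing list of positive integers. -/
def IsPartition (l : List Nat) : Prop := l.Chain' (· ≥ ·) ∧ ∀ x ∈ l, 0 < x

/-- Increase the `i`-th part (1-based indexing). -/
def upAt (i : Nat) (l : List Nat) : List Nat := l.set (i - 1) (l.getD (i - 1) 0 + 1)

/-- Decrease the `j`-th part (1-based indexing), deleting it if it becomes zero. -/
def downAt (j : Nat) (l : List Nat) : List Nat :=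
  (l.set (j - 1) (l.getD (j - 1) 0 - 1)).filter (fun x => x ≠ 0)

/-!
Every partition in sight has the shape `(3, 2^a, 1^b)`: `μ` is `(3, 2^a, 1^(b+2))` and `μ(i,j)` is
`(3, 2^(a+1), 1^b)`. Peeling off the last part with the recursion gives
`f(3, 2^a, 1^b) = f(3) + 4a + 2b`: removing a trailing `1` adds `f(2, 1^a) = 2`, and removing a
trailing `2` adds `2 f(2, 1^a) + 3 f(1) = 4`. Both sides therefore equal `f(3) + 4a + 2b + 4`.
-/

open List

lemma upAt_append_cons (l₁ l₂ : List ℕ) (x : ℕ) :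
    upAt (l₁.length + 1) (l₁ ++ x :: l₂) = l₁ ++ (x + 1) :: l₂ := by
  simp [upAt, getD_eq_getElem?_getD, set_append_right]

lemma downAt_append_cons (l₁ l₂ : List ℕ) (x : ℕ) :
    downAt (l₁.length + 1) (l₁ ++ x :: l₂) = (l₁ ++ (x - 1) :: l₂).filter (· ≠ 0) := by
  simp [downAt, getD_eq_getElem?_getD, set_append_right]

lemma isPartition_cons_replicate_append_replicate {x y z : ℕ} (a b : ℕ)
    (hyx : y ≤ x) (hzy : z ≤ y) (hz : 0 < z) :
    IsPartition (x :: (replicate a y ++ replicate b z)) := by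
  refine ⟨isChain_iff_pairwise.2 ?_, ?_⟩
  · simp only [pairwise_cons, pairwise_append, pairwise_replicate, mem_append, mem_replicate]
    grind
  · simp only [mem_cons, mem_append, mem_replicate]
    grind

def partition321 (a b : ℕ) : List ℕ := 3 :: (replicate a 2 ++ replicate b 1)

lemma isPartition_partition321 (a b : ℕ) : IsPartition (partition321 a b) :=
  isPartition_cons_replicate_append_replicate a b (by norm_num) (by norm_num) one_pos

lemma partition321_getD (a b n : ℕ) :
    (partition321 a b).getD n 0 =
      if n = 0 then 3 else if n ≤ a then 2 else if n ≤ a + b then 1 else 0 := by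
  rcases n with _ | n
  · rfl
  · simp only [partition321, getD_eq_getElem?_getD]
    grind

lemma eq_partition321 {l : List ℕ} {a b : ℕ} (hlen : l.length = a + b + 1)
    (h3 : l.getD 0 0 = 3) (h2 : ∀ n, 1 ≤ n → n ≤ a → l.getD n 0 = 2)
    (h1 : ∀ n, a < n → n ≤ a + b → l.getD n 0 = 1) : l = partition321 a b := by
  refine ext_getElem (by simp [partition321, hlen]) fun n hn _ => ?_
  rw [← getD_eq_getElem _ 0, ← getD_eq_getElem _ 0, partition321_getD]
  grind

def LastPartRecursion (f : List ℕ → ℤ) : Prop :=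
  ∀ l : List ℕ, IsPartition l → 2 ≤ l.length →
    f l = f l.dropLast + ∑ k ∈ Finset.Icc 1 (l.getLastD 0),
      ((l.getLastD 0).choose k : ℤ) * odf k * f (subHat k l.dropLast)

section LastPartRecursion

variable {f : List ℕ → ℤ}

lemma LastPartRecursion.append_one (hf : LastPartRecursion f) {l : List ℕ}
    (hl : IsPartition (l ++ [1])) (hne : l ≠ []) :
    f (l ++ [1]) = f l + f (subHat 1 l) := by
  rw [hf _ hl (by simpa [Nat.succ_le_iff, length_pos_iff] using hne)]
  simp [odf]

lemma LastPartRecursion.append_two (hf : LastPartRecursion f) {l : List ℕ}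
    (hl : IsPartition (l ++ [2])) (hne : l ≠ []) :
    f (l ++ [2]) = f l + 2 * f (subHat 1 l) + 3 * f (subHat 2 l) := by
  rw [hf _ hl (by simpa [Nat.succ_le_iff, length_pos_iff] using hne)]
  simp [odf, Finset.sum_Icc_succ_top, Finset.prod_Icc_succ_top]
  ring

variable (hf : LastPartRecursion f) (hf1 : f [1] = 0)
include hf hf1

lemma LastPartRecursion.two_replicate_one (hf2 : f [2] = 2) (a : ℕ) :
    f (2 :: replicate a 1) = 2 := by
  induction a with
  | zero => exact hf2
  | succ a ih =>
    have hl : 2 :: replicate (a + 1) 1 = (2 :: replicate a 1) ++ [1] := by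
      simp [replicate_succ']
    have hpart := isPartition_cons_replicate_append_replicate (x := 2) (y := 1) (z := 1) 0 (a + 1)
    rw [hl, hf.append_one (by simpa [hl] using hpart) (by simp), ih]
    simp [subHat, hf1]

lemma LastPartRecursion.apply_partition321 (hf2 : f [2] = 2) (a b : ℕ) :
    f (partition321 a b) = f [3] + 4 * a + 2 * b := by
  have htwo := hf.two_replicate_one hf1 hf2
  induction b with
  | zero =>
    induction a with
    | zero => simp [partition321]
    | succ a ih =>
      have hl : partition321 (a + 1) 0 = partition321 a 0 ++ [2] := by
        simp [partition321, replicate_succ']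
      rw [hl, hf.append_two (hl ▸ isPartition_partition321 _ _) (by simp [partition321]), ih]
      simp [partition321, subHat, htwo, hf1]
      ring
  | succ b ih =>
    have hl : partition321 a (b + 1) = partition321 a b ++ [1] := by
      simp [partition321, replicate_succ']
    rw [hl, hf.append_one (hl ▸ isPartition_partition321 _ _) (by simp [partition321]), ih]
    simp [partition321, subHat, htwo]
    ring

end LastPartRecursion

lemma downAt_upAt_partition321 (a c e : ℕ) :
    downAt (a + c + 3) (upAt (a + 2) (partition321 a (c + e + 2))) =
      partition321 (a + 1) (c + e) := by
  have hμ : partition321 a (c + e + 2) =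
      (3 :: replicate a 2) ++ 1 :: (replicate c 1 ++ 1 :: replicate e 1) := by
    simp [partition321, ← replicate_succ]
    omega
  have hup : (3 :: replicate a 2) ++ (1 + 1) :: (replicate c 1 ++ 1 :: replicate e 1) =
      (3 :: (replicate (a + 1) 2 ++ replicate c 1)) ++ 1 :: replicate e 1 := by
    simp [replicate_succ']
  rw [hμ, show a + 2 = (3 :: replicate a 2).length + 1 by simp, upAt_append_cons, hup,
    show a + c + 3 = (3 :: (replicate (a + 1) 2 ++ replicate c 1)).length + 1 by simp; omega,
    downAt_append_cons]
  simp [partition321, filter_append]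

theorem stmt19_general
    (d : Nat → Int) (hd0 : d 0 = 1) (hd1 : d 1 = 0)
    (hd : ∀ n : Nat, 2 ≤ n → d n = 2 * ((n : Int) - 1) * (d (n - 1) + d (n - 2)))
    (f : List Nat → Int) (hf1 : ∀ m : Nat, f [m] = d m)
    (hfr : ∀ l : List Nat, IsPartition l → 2 ≤ l.length →
      f l = f l.dropLast + ∑ k ∈ Finset.Icc 1 (l.getLastD 0),
        ((l.getLastD 0).choose k : Int) * odf k * f (subHat k l.dropLast))
    (μ : List Nat)
    (i j : Nat) (hi2 : 2 ≤ i) (hij : i < j) (hjs : j ≤ μ.length)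
    (hhead : μ.getD 0 0 = 3)
    (h2 : ∀ t : Nat, 2 ≤ t → t + 1 ≤ i → μ.getD (t - 1) 0 = 2)
    (h1 : ∀ t : Nat, i ≤ t → t ≤ μ.length → μ.getD (t - 1) 0 = 1) :
    f (downAt j (upAt i μ)) = f μ := by
  obtain ⟨a, rfl⟩ : ∃ a, i = a + 2 := ⟨i - 2, by omega⟩
  obtain ⟨c, rfl⟩ : ∃ c, j = a + c + 3 := ⟨j - a - 3, by omega⟩
  obtain ⟨e, hlen⟩ : ∃ e, μ.length = a + c + e + 3 := ⟨μ.length - (a + c + 3), by omega⟩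
  have hμ : μ = partition321 a (c + e + 2) :=
    eq_partition321 (by omega) hhead (fun n _ _ => h2 (n + 1) (by omega) (by omega))
      (fun n _ _ => h1 (n + 1) (by omega) (by omega))
  have hf1' : f [1] = 0 := by rw [hf1, hd1]
  have hf2 : f [2] = 2 := by rw [hf1, hd 2 le_rfl]; simp [hd0, hd1]
  have hf : LastPartRecursion f := hfr
  rw [hμ, downAt_upAt_partition321, hf.apply_partition321 hf1' hf2,
    hf.apply_partition321 hf1' hf2]
  push_cast
  ring

theorem stmt19
    (d : Nat → Int) (hd0 : d 0 = 1) (hd1 : d 1 = 0)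
    (hd : ∀ n : Nat, 2 ≤ n → d n = 2 * ((n : Int) - 1) * (d (n - 1) + d (n - 2)))
    (f : List Nat → Int) (hf0 : f [] = 1) (hf1 : ∀ m : Nat, f [m] = d m)
    (hfr : ∀ l : List Nat, IsPartition l → 2 ≤ l.length →
      f l = f l.dropLast + ∑ k ∈ Finset.Icc 1 (l.getLastD 0),
        ((l.getLastD 0).choose k : Int) * odf k * f (subHat k l.dropLast))
    (μ : List Nat) (hμ : IsPartition μ) (hs : 2 ≤ μ.length)
    (i j : Nat) (hi2 : 2 ≤ i) (hij : i < j) (hjs : j ≤ μ.length)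
    (hlt : μ.getD (i - 1) 0 < μ.getD (i - 2) 0)
    (hj : j = μ.length ∨ μ.getD j 0 < μ.getD (j - 1) 0)
    (hhead : μ.getD 0 0 = 3)
    (h2 : ∀ t : Nat, 2 ≤ t → t + 1 ≤ i → μ.getD (t - 1) 0 = 2)
    (h1 : ∀ t : Nat, i ≤ t → t ≤ μ.length → μ.getD (t - 1) 0 = 1) :
    f (downAt j (upAt i μ)) = f μ :=
  stmt19_general d hd0 hd1 hd f hf1 hfr μ i j hi2 hij hjs hhead h2 h1
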